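/- arXiv:1310.2017 — 3 statements merged into one kernel-verified Lean document; each statement's English description precedes it below -/
import Mathlib

section
/- For all natural numbers a, b, c, d with a + c + 1 ≤ b + d, and for every bit z ∈ {0,1}, the Hamming distance between ψ⁻¹(0^a 1^b ∘ 0 ∘ 0^c 1^d ∘ z) and ψ⁻¹(0^a 1^b ∘ 1 ∘ 0^c 1^d ∘ z) is at most 5. -/
/-- Hamming weight of a binary string. -/
def hWt {n : ℕ} (x : Fin n → Bool) : ℕ := (Finset.univ.filter fun i => x i = true).card

/-- Number of ones of `x` among a set of coordinates. -/
def numTrue {n : ℕ} (s : Finset (Fin n)) (x : Fin n → Bool) : ℕ :=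
  (s.filter fun i => x i = true).card

/-- Number of zeros of `x` among a set of coordinates. -/
def numFalse {n : ℕ} (s : Finset (Fin n)) (x : Fin n → Bool) : ℕ :=
  (s.filter fun i => x i = false).card

/-- Coordinate `i` is marked by the De Bruijn–Tengbergen–Kruyswijk marking procedure on
`x` iff `i` lies in an interval `[s, e]` on which `x` (with `1` read as `(` and `0` as `)`)
is a balanced string of parentheses. -/
def Marked {n : ℕ} (x : Fin n → Bool) (i : Fin n) : Prop :=
  ∃ s e : Fin n, s ≤ i ∧ i ≤ e ∧
    numTrue (Finset.Icc s e) x = numFalse (Finset.Icc s e) x ∧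
    ∀ k : Fin n, s ≤ k → k ≤ e →
      numFalse (Finset.Icc s k) x ≤ numTrue (Finset.Icc s k) x

open Classical in
/-- The number of unmarked zeros of `x`. -/
noncomputable def unmarkedZeros {n : ℕ} (x : Fin n → Bool) : ℕ :=
  (Finset.univ.filter fun i => ¬ Marked x i ∧ x i = false).card

open Classical in
/-- The (1-indexed) rank of coordinate `i` among the unmarked coordinates of `x`. -/
noncomputable def urank {n : ℕ} (x : Fin n → Bool) (i : Fin n) : ℕ :=
  (Finset.univ.filter fun j => ¬ Marked x j ∧ j ≤ i).card

open Classical in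
/-- The inverse of the chain-based bijection `ψ`: for `w = x ∘ z` with `x ∈ {0,1}^n`,
marked bits of `x` are kept, and if the unmarked part of `x` is `0^a 1^b`, it is replaced
by `0^{2a} 1^{b-a}` when `z = 1` and by `0^{2a+1} 1^{b-a-1}` when `z = 0` (i.e. the point
descends its chain to twice its distance from the top, plus one if `z = 0`). -/
noncomputable def psiInv {n : ℕ} (w : Fin (n + 1) → Bool) : Fin n → Bool :=
  fun i =>
    let x : Fin n → Bool := fun j => w j.castSucc
    let a' : ℕ := if w (Fin.last n) = true then 2 * unmarkedZeros x
                  else 2 * unmarkedZeros x + 1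
    if Marked x i then x i
    else if urank x i ≤ a' then false else true

/-- The string `0^a 1^b ∘ mid ∘ 0^c 1^d` of length `a+b+1+c+d`. -/
def str (a b c d : ℕ) (mid : Bool) : Fin (a + b + 1 + c + d) → Bool :=
  fun i =>
    if (i : ℕ) < a then false
    else if (i : ℕ) < a + b then true
    else if (i : ℕ) < a + b + 1 then mid
    else if (i : ℕ) < a + b + 1 + c then false
    else true


/-! ### Auxiliary development -/

/-- The generic block string `0^A 1^B 0^C 1^(n-A-B-C)`. -/
def gstr (A B C : ℕ) {n : ℕ} : Fin n → Bool := fun i =>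
  if (i : ℕ) < A then false
  else if (i : ℕ) < A + B then true
  else if (i : ℕ) < A + B + C then false
  else true

lemma gstr_true_iff {n A B C : ℕ} (i : Fin n) :
    gstr A B C i = true ↔ ((A ≤ (i : ℕ) ∧ (i : ℕ) < A + B) ∨ A + B + C ≤ (i : ℕ)) := by
  unfold gstr; split_ifs <;> simp <;> omega

lemma gstr_false_iff {n A B C : ℕ} (i : Fin n) :
    gstr A B C i = false ↔ ((i : ℕ) < A ∨ (A + B ≤ (i : ℕ) ∧ (i : ℕ) < A + B + C)) := by
  unfold gstr; split_ifs <;> simp <;> omega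

lemma count_two' (u v p q r : ℕ) (hpq : p ≤ q) (hqr : q ≤ r) :
    ((Finset.Ico u v).filter fun j => j < p ∨ (q ≤ j ∧ j < r)).card
      = (min v p - u) + (min v r - max u q) := by
  have hset : (Finset.Ico u v).filter (fun j => j < p ∨ (q ≤ j ∧ j < r))
      = Finset.Ico u (min v p) ∪ Finset.Ico (max u q) (min v r) := by
    ext j; simp only [Finset.mem_filter, Finset.mem_Ico, Finset.mem_union]; omega
  rw [hset, Finset.card_union_of_disjoint ?dis, Nat.card_Ico, Nat.card_Ico]
  case dis =>
    rw [Finset.disjoint_left]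
    intro x hx hx'
    simp only [Finset.mem_Ico] at hx hx'
    omega

lemma card_filter_fin_univ {n : ℕ} (P : ℕ → Prop) [DecidablePred P] :
    ((Finset.univ : Finset (Fin n)).filter fun i : Fin n => P i.val).card
      = ((Finset.range n).filter P).card := by
  refine Finset.card_bij (fun i _ => i.val) (fun i hi => ?_)
    (fun i _ j _ hij => Fin.val_injective hij) (fun j hj => ?_)
  · rw [Finset.mem_filter] at hi
    rw [Finset.mem_filter, Finset.mem_range]
    exact ⟨i.isLt, hi.2⟩
  · rw [Finset.mem_filter, Finset.mem_range] at hj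
    refine ⟨⟨j, hj.1⟩, ?_, rfl⟩
    rw [Finset.mem_filter]
    exact ⟨Finset.mem_univ _, hj.2⟩

lemma card_filter_fin_Icc {n : ℕ} (s e : Fin n) (P : ℕ → Prop) [DecidablePred P] :
    ((Finset.Icc s e).filter fun i : Fin n => P i.val).card
      = ((Finset.Icc (s : ℕ) (e : ℕ)).filter P).card := by
  refine Finset.card_bij (fun i _ => i.val) (fun i hi => ?_)
    (fun i _ j _ hij => Fin.val_injective hij) (fun j hj => ?_)
  · rw [Finset.mem_filter, Finset.mem_Icc] at hi
    rw [Finset.mem_filter, Finset.mem_Icc]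
    exact ⟨⟨Fin.le_def.mp hi.1.1, Fin.le_def.mp hi.1.2⟩, hi.2⟩
  · rw [Finset.mem_filter, Finset.mem_Icc] at hj
    have hjn : j < n := lt_of_le_of_lt hj.1.2 e.isLt
    refine ⟨⟨j, hjn⟩, ?_, rfl⟩
    rw [Finset.mem_filter, Finset.mem_Icc]
    exact ⟨⟨Fin.le_def.mpr hj.1.1, Fin.le_def.mpr hj.1.2⟩, hj.2⟩

lemma numTrue_add_numFalse {n : ℕ} (x : Fin n → Bool) (s e : Fin n) :
    numTrue (Finset.Icc s e) x + numFalse (Finset.Icc s e) x = (e : ℕ) + 1 - (s : ℕ) := by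
  unfold numTrue numFalse
  have h1 : (Finset.Icc s e).filter (fun i => x i = false)
      = (Finset.Icc s e).filter (fun i => ¬ x i = true) :=
    Finset.filter_congr (fun i _ => by simp)
  rw [h1, Finset.card_filter_add_card_filter_not, Fin.card_Icc]

lemma numFalse_gstr {n A B C : ℕ} (s e : Fin n) :
    numFalse (Finset.Icc s e) (gstr A B C)
      = (min ((e : ℕ) + 1) A - (s : ℕ)) + (min ((e : ℕ) + 1) (A + B + C) - max (s : ℕ) (A + B)) := by
  unfold numFalse
  have h1 : (Finset.Icc s e).filter (fun i => gstr A B C i = false)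
      = (Finset.Icc s e).filter (fun i : Fin n => i.val < A ∨ (A + B ≤ i.val ∧ i.val < A + B + C)) :=
    Finset.filter_congr (fun i _ => gstr_false_iff i)
  rw [h1, card_filter_fin_Icc s e (fun j => j < A ∨ (A + B ≤ j ∧ j < A + B + C)),
    ← Finset.Ico_add_one_right_eq_Icc, count_two' _ _ A (A + B) (A + B + C) (by omega) (by omega)]

lemma marked_gstr_iff {n A B C : ℕ} (hn : A + B + C ≤ n) (i : Fin n) :
    Marked (gstr A B C (n := n)) i
      ↔ (A + B - min B C ≤ (i : ℕ) ∧ (i : ℕ) < A + B + min B C) := by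
  constructor
  · rintro ⟨s, e, hsi, hie, hbal, hpre⟩
    rw [Fin.le_def] at hsi hie
    have hxs : gstr A B C s = true := by
      cases hv : gstr A B C s
      · exfalso
        have h2 := hpre s le_rfl (Fin.le_def.mpr (le_trans hsi hie))
        unfold numTrue numFalse at h2
        rw [Finset.Icc_self, Finset.filter_singleton, Finset.filter_singleton,
          if_pos hv, if_neg (by rw [hv]; simp)] at h2
        simp at h2
      · rfl
    rw [gstr_true_iff] at hxs
    have hcard := numTrue_add_numFalse (gstr A B C) s e
    rw [numFalse_gstr] at hbal hcard
    have he := e.isLt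
    have hiv := i.isLt
    by_cases hsbig : A + B + C ≤ (s : ℕ)
    · omega
    · by_cases hse : (e : ℕ) < A + B + C
      · omega
      · by_cases hC : C = 0
        · subst hC; omega
        · have hk : A + B + C - 1 < n := by omega
          have h3 := hpre ⟨A + B + C - 1, hk⟩
            (Fin.le_def.mpr (by show (s : ℕ) ≤ A + B + C - 1; omega))
            (Fin.le_def.mpr (by show A + B + C - 1 ≤ (e : ℕ); omega))
          have hck := numTrue_add_numFalse (gstr A B C) s ⟨A + B + C - 1, hk⟩
          rw [numFalse_gstr] at h3 hck
          have hkv : ((⟨A + B + C - 1, hk⟩ : Fin n) : ℕ) = A + B + C - 1 := rfl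
          rw [hkv] at h3 hck
          omega
  · intro hiv
    have hi := i.isLt
    have hmB : min B C ≤ B := min_le_left _ _
    have hmC : min B C ≤ C := min_le_right _ _
    have hL : A + B - min B C < n := by omega
    have hR : A + B + min B C - 1 < n := by omega
    refine ⟨⟨A + B - min B C, hL⟩, ⟨A + B + min B C - 1, hR⟩, ?_, ?_, ?_, ?_⟩
    · rw [Fin.le_def]; exact (by omega : A + B - min B C ≤ (i : ℕ))
    · rw [Fin.le_def]; exact (by omega : (i : ℕ) ≤ A + B + min B C - 1)
    · have hc := numTrue_add_numFalse (gstr A B C) ⟨A + B - min B C, hL⟩ ⟨A + B + min B C - 1, hR⟩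
      rw [numFalse_gstr] at hc ⊢
      have hv1 : ((⟨A + B - min B C, hL⟩ : Fin n) : ℕ) = A + B - min B C := rfl
      have hv2 : ((⟨A + B + min B C - 1, hR⟩ : Fin n) : ℕ) = A + B + min B C - 1 := rfl
      rw [hv1, hv2] at hc ⊢
      omega
    · intro k hk1 hk2
      rw [Fin.le_def] at hk1 hk2
      have hv1 : ((⟨A + B - min B C, hL⟩ : Fin n) : ℕ) = A + B - min B C := rfl
      have hv2 : ((⟨A + B + min B C - 1, hR⟩ : Fin n) : ℕ) = A + B + min B C - 1 := rfl
      rw [hv1] at hk1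
      rw [hv2] at hk2
      have hc := numTrue_add_numFalse (gstr A B C) ⟨A + B - min B C, hL⟩ k
      rw [numFalse_gstr] at hc ⊢
      rw [hv1] at hc ⊢
      omega

open Classical in
lemma unmarkedZeros_gstr {n A B C : ℕ} (hn : A + B + C ≤ n) :
    unmarkedZeros (gstr A B C (n := n)) = A + C - min B C := by
  unfold unmarkedZeros
  have h1 : (Finset.univ : Finset (Fin n)).filter
        (fun i => ¬ Marked (gstr A B C) i ∧ gstr A B C i = false)
      = Finset.univ.filter (fun i : Fin n =>
          ¬ (A + B - min B C ≤ i.val ∧ i.val < A + B + min B C)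
            ∧ (i.val < A ∨ (A + B ≤ i.val ∧ i.val < A + B + C))) :=
    Finset.filter_congr (fun i _ => by rw [marked_gstr_iff hn, gstr_false_iff])
  rw [h1, card_filter_fin_univ (fun j =>
      ¬ (A + B - min B C ≤ j ∧ j < A + B + min B C) ∧ (j < A ∨ (A + B ≤ j ∧ j < A + B + C)))]
  have hmB : min B C ≤ B := min_le_left _ _
  have hmC : min B C ≤ C := min_le_right _ _
  have h2 : (Finset.range n).filter (fun j =>
        ¬ (A + B - min B C ≤ j ∧ j < A + B + min B C) ∧ (j < A ∨ (A + B ≤ j ∧ j < A + B + C)))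
      = Finset.Ico 0 A ∪ Finset.Ico (A + B + min B C) (A + B + C) := by
    ext j
    simp only [Finset.mem_filter, Finset.mem_range, Finset.mem_Ico, Finset.mem_union]
    omega
  rw [h2, Finset.card_union_of_disjoint ?dis, Nat.card_Ico, Nat.card_Ico]
  · omega
  case dis =>
    rw [Finset.disjoint_left]
    intro x hx hx'
    simp only [Finset.mem_Ico] at hx hx'
    omega

open Classical in
lemma urank_gstr {n A B C : ℕ} (hn : A + B + C ≤ n) (i : Fin n) :
    urank (gstr A B C (n := n)) i
      = min ((i : ℕ) + 1) (A + B - min B C) + (((i : ℕ) + 1) - (A + B + min B C)) := by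
  unfold urank
  have h1 : (Finset.univ : Finset (Fin n)).filter
        (fun j => ¬ Marked (gstr A B C) j ∧ j ≤ i)
      = Finset.univ.filter (fun j : Fin n =>
          ¬ (A + B - min B C ≤ j.val ∧ j.val < A + B + min B C) ∧ j.val ≤ i.val) :=
    Finset.filter_congr (fun j _ => by rw [marked_gstr_iff hn, Fin.le_def])
  rw [h1, card_filter_fin_univ (fun j =>
      ¬ (A + B - min B C ≤ j ∧ j < A + B + min B C) ∧ j ≤ (i : ℕ))]
  have hmB : min B C ≤ B := min_le_left _ _
  have hiv := i.isLt
  have h2 : (Finset.range n).filter (fun j =>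
        ¬ (A + B - min B C ≤ j ∧ j < A + B + min B C) ∧ j ≤ (i : ℕ))
      = Finset.Ico 0 (min ((i : ℕ) + 1) (A + B - min B C))
          ∪ Finset.Ico (A + B + min B C) ((i : ℕ) + 1) := by
    ext j
    simp only [Finset.mem_filter, Finset.mem_range, Finset.mem_Ico, Finset.mem_union]
    omega
  rw [h2, Finset.card_union_of_disjoint ?dis, Nat.card_Ico, Nat.card_Ico]
  · omega
  case dis =>
    rw [Finset.disjoint_left]
    intro x hx hx'
    simp only [Finset.mem_Ico] at hx hx'
    omega

open Classical in
lemma psiInv_snoc {n : ℕ} (x : Fin n → Bool) (z : Bool) (i : Fin n) :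
    psiInv (Fin.snoc x z) i
      = if Marked x i then x i
        else if urank x i ≤ (if z = true then 2 * unmarkedZeros x else 2 * unmarkedZeros x + 1)
          then false else true := by
  have hx : (fun j : Fin n => (Fin.snoc x z : Fin (n+1) → Bool) j.castSucc) = x :=
    funext fun j => @Fin.snoc_castSucc n (fun _ => Bool) z x j
  unfold psiInv
  simp only [hx, Fin.snoc_castSucc, Fin.snoc_last]

open Classical in
lemma psiInv_gstr_true_iff {n A B C : ℕ} (hn : A + B + C ≤ n) (z : Bool) (i : Fin n) :
    (psiInv (Fin.snoc (gstr A B C (n := n)) z) i = true)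
      ↔ (if A + B - min B C ≤ (i : ℕ) ∧ (i : ℕ) < A + B + min B C
         then ((A ≤ (i : ℕ) ∧ (i : ℕ) < A + B) ∨ A + B + C ≤ (i : ℕ))
         else ¬ (min ((i : ℕ) + 1) (A + B - min B C) + (((i : ℕ) + 1) - (A + B + min B C))
                  ≤ 2 * (A + C - min B C) + (if z = true then 0 else 1))) := by
  rw [psiInv_snoc]
  by_cases hm : Marked (gstr A B C (n := n)) i
  · rw [if_pos hm, if_pos ((marked_gstr_iff hn i).mp hm)]
    exact gstr_true_iff i
  · rw [if_neg hm, if_neg (fun hc => hm ((marked_gstr_iff hn i).mpr hc)),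
      urank_gstr hn, unmarkedZeros_gstr hn]
    have hz : (if z = true then 2 * (A + C - min B C) else 2 * (A + C - min B C) + 1)
        = 2 * (A + C - min B C) + (if z = true then 0 else 1) := by cases z <;> simp
    rw [hz]
    split_ifs <;> simp_all <;> omega

lemma str_false_eq (a b c d : ℕ) : str a b c d false = gstr a b (c + 1) := by
  funext i
  unfold str gstr
  split_ifs <;> first | rfl | (exfalso; omega)

lemma str_true_eq (a b c d : ℕ) : str a b c d true = gstr a (b + 1) c := by
  funext i
  unfold str gstr
  split_ifs <;> first | rfl | (exfalso; omega)

lemma card_le_five {α : Type*} [DecidableEq α] (x1 x2 x3 x4 x5 : α) :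
    ({x1, x2, x3, x4, x5} : Finset α).card ≤ 5 := by
  apply le_trans (Finset.card_insert_le _ _)
  apply Nat.succ_le_succ
  apply le_trans (Finset.card_insert_le _ _)
  apply Nat.succ_le_succ
  apply le_trans (Finset.card_insert_le _ _)
  apply Nat.succ_le_succ
  apply le_trans (Finset.card_insert_le _ _)
  apply Nat.succ_le_succ
  simp

/-- For all `a, b, c, d` with `a + c + 1 ≤ b + d` and every bit `z`, the images under
`ψ⁻¹` of `0^a 1^b ∘ 0 ∘ 0^c 1^d ∘ z` and `0^a 1^b ∘ 1 ∘ 0^c 1^d ∘ z` are at Hamming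
distance at most 5. -/
theorem psiInv_dist_le_five (a b c d : ℕ) (h : a + c + 1 ≤ b + d) (z : Bool) :
    hammingDist (psiInv (Fin.snoc (str a b c d false) z))
      (psiInv (Fin.snoc (str a b c d true) z)) ≤ 5 := by
  classical
  obtain ⟨δ, hδval, hδ1⟩ : ∃ δ : ℕ, (if z = true then (0 : ℕ) else 1) = δ ∧ δ ≤ 1 := by
    cases z
    · exact ⟨1, by norm_num, by norm_num⟩
    · exact ⟨0, by norm_num, by norm_num⟩
  rw [str_false_eq, str_true_eq]
  unfold hammingDist
  rcases Nat.lt_trichotomy c b with hbc | hbc | hbc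
  · -- case c < b
    have key : ∀ i : Fin (a + b + 1 + c + d),
        psiInv (Fin.snoc (gstr a b (c + 1)) z) i ≠ psiInv (Fin.snoc (gstr a (b + 1) c) z) i →
        ((i : ℕ) = a + b ∨ (i : ℕ) = a + b - c - 1 ∨ (i : ℕ) = a + b - c ∨
          (i : ℕ) = 2 * a + 2 * c + δ ∨ (i : ℕ) = 2 * a + 2 * c + 1 + δ) := by
      intro i hne'
      have hne : ¬ ((psiInv (Fin.snoc (gstr a b (c + 1)) z) i = true)
          ↔ (psiInv (Fin.snoc (gstr a (b + 1) c) z) i = true)) := by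
        rw [← Bool.eq_iff_iff]; exact hne'
      rw [psiInv_gstr_true_iff (by omega) z i, psiInv_gstr_true_iff (by omega) z i, hδval,
          show min b (c + 1) = c + 1 from by omega, show min (b + 1) c = c from by omega] at hne
      have hiv := i.isLt
      split_ifs at hne <;> omega
    refine le_trans (Finset.card_le_card (fun i hi => ?_))
      (card_le_five (⟨a + b, by omega⟩ : Fin (a + b + 1 + c + d)) ⟨a + b - c - 1, by omega⟩ ⟨a + b - c, by omega⟩
        ⟨min (2 * a + 2 * c + δ) (a + b + c + d), by omega⟩
        ⟨min (2 * a + 2 * c + 1 + δ) (a + b + c + d), by omega⟩)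
    simp only [Finset.mem_filter, Finset.mem_univ, true_and] at hi
    have hk := key i hi
    have hiv := i.isLt
    simp only [Finset.mem_insert, Finset.mem_singleton, Fin.ext_iff]
    omega
  · -- case c = b
    have key : ∀ i : Fin (a + b + 1 + c + d),
        psiInv (Fin.snoc (gstr a b (c + 1)) z) i ≠ psiInv (Fin.snoc (gstr a (b + 1) c) z) i →
        ((i : ℕ) = a ∨ (i : ℕ) = a + b ∨ (i : ℕ) = a + 2 * b ∨
          (i : ℕ) = 2 * a + 2 * c + δ ∨ (i : ℕ) = 2 * a + 2 * c + 1 + δ) := by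
      intro i hne'
      have hne : ¬ ((psiInv (Fin.snoc (gstr a b (c + 1)) z) i = true)
          ↔ (psiInv (Fin.snoc (gstr a (b + 1) c) z) i = true)) := by
        rw [← Bool.eq_iff_iff]; exact hne'
      rw [psiInv_gstr_true_iff (by omega) z i, psiInv_gstr_true_iff (by omega) z i, hδval,
          show min b (c + 1) = b from by omega, show min (b + 1) c = c from by omega] at hne
      have hiv := i.isLt
      split_ifs at hne <;> omega
    refine le_trans (Finset.card_le_card (fun i hi => ?_))
      (card_le_five (⟨a, by omega⟩ : Fin (a + b + 1 + c + d)) ⟨a + b, by omega⟩ ⟨a + 2 * b, by omega⟩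
        ⟨min (2 * a + 2 * c + δ) (a + b + c + d), by omega⟩
        ⟨min (2 * a + 2 * c + 1 + δ) (a + b + c + d), by omega⟩)
    simp only [Finset.mem_filter, Finset.mem_univ, true_and] at hi
    have hk := key i hi
    have hiv := i.isLt
    simp only [Finset.mem_insert, Finset.mem_singleton, Fin.ext_iff]
    omega
  · -- case b < c
    have key : ∀ i : Fin (a + b + 1 + c + d),
        psiInv (Fin.snoc (gstr a b (c + 1)) z) i ≠ psiInv (Fin.snoc (gstr a (b + 1) c) z) i →
        ((i : ℕ) = a + b ∨ (i : ℕ) = a + 2 * b ∨ (i : ℕ) = a + 2 * b + 1 ∨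
          (i : ℕ) = 2 * a + 2 * c + δ ∨ (i : ℕ) = 2 * a + 2 * c + 1 + δ) := by
      intro i hne'
      have hne : ¬ ((psiInv (Fin.snoc (gstr a b (c + 1)) z) i = true)
          ↔ (psiInv (Fin.snoc (gstr a (b + 1) c) z) i = true)) := by
        rw [← Bool.eq_iff_iff]; exact hne'
      rw [psiInv_gstr_true_iff (by omega) z i, psiInv_gstr_true_iff (by omega) z i, hδval,
          show min b (c + 1) = b from by omega, show min (b + 1) c = b + 1 from by omega] at hne
      have hiv := i.isLt
      split_ifs at hne <;> omega
    refine le_trans (Finset.card_le_card (fun i hi => ?_))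
      (card_le_five (⟨a + b, by omega⟩ : Fin (a + b + 1 + c + d)) ⟨a + 2 * b, by omega⟩ ⟨a + 2 * b + 1, by omega⟩
        ⟨min (2 * a + 2 * c + δ) (a + b + c + d), by omega⟩
        ⟨min (2 * a + 2 * c + 1 + δ) (a + b + c + d), by omega⟩)
    simp only [Finset.mem_filter, Finset.mem_univ, true_and] at hi
    have hk := key i hi
    have hiv := i.isLt
    simp only [Finset.mem_insert, Finset.mem_singleton, Fin.ext_iff]
    omega
end

section
/- Let n, a, b be natural numbers with a + b ≡ n (mod 2) and a + b ≤ n. The number of x ∈ {0,1}^n whose De Bruijn–Tengbergen–Kruyswijk marking contains exactly a unmarked zeros and exactly b unmarked ones equals C(n, (n−a−b)/2) − C(n, (n−a−b−2)/2). -/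
/-- One step of the De Bruijn–Tengbergen–Kruyswijk marking procedure on `x` with current
marked set `M`: choose unmarked coordinates `i < j` with `x i = 1`, `x j = 0`, all
coordinates strictly between them already marked, and mark both. -/
def MarkStep {n : ℕ} (x : Fin n → Bool) (M M' : Finset (Fin n)) : Prop :=
  ∃ i j : Fin n, i < j ∧ i ∉ M ∧ j ∉ M ∧ x i = true ∧ x j = false ∧
    (∀ k : Fin n, i < k → k < j → k ∈ M) ∧ M' = insert i (insert j M)

/-- automaton step -/
def mstep : ℕ × ℕ → Bool → ℕ × ℕ
  | (a, b), true => (a, b + 1)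
  | (a, b), false => if b = 0 then (a + 1, 0) else (a, b - 1)

def wred (l : List Bool) : ℕ × ℕ := l.foldl mstep (0, 0)

def gg (n s : ℕ) : ℕ := if s ≤ n ∧ s % 2 = n % 2 then n.choose ((n - s) / 2) else 0

def Nc (n a b : ℕ) : ℕ :=
  (Finset.univ.filter fun x : Fin n → Bool => wred (List.ofFn x) = (a, b)).card

lemma mstep_true (a b : ℕ) : mstep (a, b) true = (a, b + 1) := rfl

lemma mstep_false_zero (a : ℕ) : mstep (a, 0) false = (a + 1, 0) := by simp [mstep]

lemma mstep_false_succ (a b : ℕ) : mstep (a, b + 1) false = (a, b) := by simp [mstep]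

lemma mstep_true_false (s : ℕ × ℕ) : mstep (mstep s true) false = s := by
  obtain ⟨a, b⟩ := s; simp [mstep]

/-- Pascal-type lemma -/
lemma K1 (n t : ℕ) : gg n t + gg (n + 1) (t + 3) = gg (n + 1) (t + 1) + gg n (t + 4) := by
  unfold gg
  by_cases hp : t % 2 = n % 2
  · -- parity ok
    rcases le_or_gt t n with hle | hlt
    · rcases eq_or_lt_of_le hle with rfl | hlt2
      · -- t = n
        rw [if_pos ⟨le_refl _, hp⟩, if_neg (by omega), if_pos (by omega), if_neg (by omega)]
        simp
      · -- t ≤ n - 2 by parity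
        have h2 : t + 2 ≤ n := by omega
        rcases le_or_gt (t + 4) n with h4 | h4
        · -- generic case, m ≥ 2
          obtain ⟨k, hk⟩ : ∃ k, (n - t) / 2 = k + 2 := ⟨(n - t) / 2 - 2, by omega⟩
          rw [if_pos ⟨by omega, by omega⟩, if_pos ⟨by omega, by omega⟩,
            if_pos ⟨by omega, by omega⟩, if_pos ⟨by omega, by omega⟩]
          have e1 : (n - t) / 2 = k + 2 := hk
          have e2 : (n + 1 - (t + 3)) / 2 = k + 1 := by omega
          have e3 : (n + 1 - (t + 1)) / 2 = k + 2 := by omega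
          have e4 : (n - (t + 4)) / 2 = k := by omega
          rw [e1, e2, e3, e4]
          have p1 : (n + 1).choose (k + 2) = n.choose (k + 1) + n.choose (k + 2) :=
            Nat.choose_succ_succ n (k + 1)
          have p2 : (n + 1).choose (k + 1) = n.choose k + n.choose (k + 1) :=
            Nat.choose_succ_succ n k
          omega
        · -- t + 2 ≤ n < t + 4, so n = t + 2
          have : n = t + 2 := by omega
          subst this
          rw [if_pos ⟨by omega, by omega⟩, if_pos ⟨by omega, by omega⟩,
            if_pos ⟨by omega, by omega⟩, if_neg (by omega)]
          have e1 : (t + 2 - t) / 2 = 1 := by omega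
          have e2 : (t + 2 + 1 - (t + 3)) / 2 = 0 := by omega
          have e3 : (t + 2 + 1 - (t + 1)) / 2 = 1 := by omega
          rw [e1, e2, e3]
          simp [Nat.choose_one_right]
    · -- t > n, all zero
      rw [if_neg (by omega), if_neg (by omega), if_neg (by omega), if_neg (by omega)]
  · rw [if_neg (by omega), if_neg (by omega), if_neg (by omega), if_neg (by omega)]

lemma K0 (n : ℕ) : gg n 1 + gg (n + 1) 2 = gg (n + 1) 0 + gg n 3 := by
  unfold gg
  rcases Nat.even_or_odd n with he | ho
  · obtain ⟨k, rfl⟩ := he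
    rw [if_neg (by omega), if_neg (by omega), if_neg (by omega), if_neg (by omega)]
  · obtain ⟨k, rfl⟩ := ho
    rcases Nat.eq_zero_or_pos k with rfl | hk
    · norm_num [Nat.choose]
    · rw [if_pos ⟨by omega, by omega⟩, if_pos ⟨by omega, by omega⟩,
        if_pos ⟨by omega, by omega⟩, if_pos ⟨by omega, by omega⟩]
      have e1 : (2 * k + 1 - 1) / 2 = k := by omega
      have e2 : (2 * k + 1 + 1 - 2) / 2 = k := by omega
      have e3 : (2 * k + 1 + 1 - 0) / 2 = k + 1 := by omega
      have e4 : (2 * k + 1 - 3) / 2 = k - 1 := by omega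
      rw [e1, e2, e3, e4]
      obtain ⟨j, rfl⟩ : ∃ j, k = j + 1 := ⟨k - 1, by omega⟩
      have p1 : (2 * (j + 1) + 1 + 1).choose (j + 1) =
          (2 * (j + 1) + 1).choose j + (2 * (j + 1) + 1).choose (j + 1) :=
        Nat.choose_succ_succ (2 * (j + 1) + 1) j
      have p2 : (2 * (j + 1) + 1 + 1).choose (j + 1 + 1) =
          (2 * (j + 1) + 1).choose (j + 1) + (2 * (j + 1) + 1).choose (j + 1 + 1) :=
        Nat.choose_succ_succ (2 * (j + 1) + 1) (j + 1)
      have ps : (2 * (j + 1) + 1).choose (j + 1 + 1) = (2 * (j + 1) + 1).choose (j + 1) :=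
        Nat.choose_symm_half (j + 1)
      simp only [Nat.add_sub_cancel]
      omega

lemma wred_init {n : ℕ} (x : Fin (n + 1) → Bool) :
    wred (List.ofFn x) = mstep (wred (List.ofFn (Fin.init x))) (x (Fin.last n)) := by
  rw [List.ofFn_succ' x, List.concat_eq_append]
  unfold wred
  rw [List.foldl_concat]
  rfl

lemma mstep_true_iff (s : ℕ × ℕ) (a b : ℕ) :
    mstep s true = (a, b + 1) ↔ s = (a, b) := by
  obtain ⟨p, q⟩ := s
  simp [mstep, Prod.ext_iff]

lemma mstep_true_ne_zero (s : ℕ × ℕ) (a : ℕ) : mstep s true ≠ (a, 0) := by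
  obtain ⟨p, q⟩ := s
  simp [mstep, Prod.ext_iff]

lemma mstep_false_iff_succ (s : ℕ × ℕ) (a c : ℕ) :
    mstep s false = (a, c + 1) ↔ s = (a, c + 2) := by
  obtain ⟨p, q⟩ := s
  rcases q with _ | q <;> simp [mstep, Prod.ext_iff] <;> omega

lemma mstep_false_iff_zero_zero (s : ℕ × ℕ) :
    mstep s false = (0, 0) ↔ s = (0, 1) := by
  obtain ⟨p, q⟩ := s
  rcases q with _ | q <;> simp [mstep, Prod.ext_iff] <;> omega

lemma mstep_false_iff_succ_zero (s : ℕ × ℕ) (d : ℕ) :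
    mstep s false = (d + 1, 0) ↔ s = (d + 1, 1) ∨ s = (d, 0) := by
  obtain ⟨p, q⟩ := s
  rcases q with _ | q <;> simp [mstep, Prod.ext_iff] <;> omega

lemma card_last_fiber (n a b : ℕ) (c : Bool) :
    (Finset.univ.filter fun x : Fin (n + 1) → Bool =>
        wred (List.ofFn x) = (a, b) ∧ x (Fin.last n) = c).card =
    (Finset.univ.filter fun y : Fin n → Bool =>
        mstep (wred (List.ofFn y)) c = (a, b)).card := by
  refine Finset.card_bij' (fun x _ => Fin.init x) (fun y _ => Fin.snoc y c)
    ?hi ?hj ?left_inv ?right_inv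
  case hi =>
    intro x hx
    simp only [Finset.mem_filter, Finset.mem_univ, true_and] at hx ⊢
    obtain ⟨h1, h2⟩ := hx
    rw [wred_init, h2] at h1
    exact h1
  case hj =>
    intro y hy
    simp only [Finset.mem_filter, Finset.mem_univ, true_and] at hy ⊢
    rw [wred_init, Fin.init_snoc, Fin.snoc_last]
    exact ⟨hy, rfl⟩
  case left_inv =>
    intro x hx
    simp only [Finset.mem_filter, Finset.mem_univ, true_and] at hx
    rw [← hx.2]
    exact Fin.snoc_init_self x
  case right_inv =>
    intro y _
    exact Fin.init_snoc _ _

/-- split the count over the last coordinate -/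
lemma Nc_succ (n a b : ℕ) :
    Nc (n + 1) a b =
      (Finset.univ.filter fun y : Fin n → Bool =>
          mstep (wred (List.ofFn y)) true = (a, b)).card +
      (Finset.univ.filter fun y : Fin n → Bool =>
          mstep (wred (List.ofFn y)) false = (a, b)).card := by
  classical
  unfold Nc
  rw [Finset.card_eq_sum_card_fiberwise
    (f := fun x : Fin (n + 1) → Bool => x (Fin.last n)) (t := Finset.univ)
    (fun x _ => Finset.mem_univ _), Fintype.sum_bool]
  rw [Finset.filter_filter, Finset.filter_filter, card_last_fiber, card_last_fiber]

lemma Nc_zero (a b : ℕ) : Nc 0 a b = if a = 0 ∧ b = 0 then 1 else 0 := by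
  classical
  unfold Nc
  have h : ∀ x : Fin 0 → Bool, wred (List.ofFn x) = (0, 0) := by
    intro x
    rw [List.ofFn_zero]
    rfl
  split_ifs with hab
  · obtain ⟨rfl, rfl⟩ := hab
    rw [Finset.filter_true_of_mem (fun x _ => h x)]
    simp
  · rw [Finset.filter_false_of_mem]
    · simp
    · intro x _
      rw [h x]
      intro hc
      apply hab
      obtain ⟨h1, h2⟩ := Prod.mk.injEq _ _ _ _ ▸ hc
      exact ⟨h1.symm, h2.symm⟩

lemma Nc_add_gg : ∀ n a b : ℕ, Nc n a b + gg n (a + b + 2) = gg n (a + b) := by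
  intro n
  induction n with
  | zero =>
    intro a b
    rw [Nc_zero]
    unfold gg
    split_ifs <;> simp_all <;> omega
  | succ n ih =>
    intro a b
    rw [Nc_succ]
    rcases b with _ | c
    · -- b = 0
      have ht : (Finset.univ.filter fun y : Fin n → Bool =>
          mstep (wred (List.ofFn y)) true = (a, 0)).card = 0 := by
        rw [Finset.card_eq_zero, Finset.filter_eq_empty_iff]
        intro y _
        exact mstep_true_ne_zero _ _
      rcases a with _ | d
      · -- a = 0 : false branch condition ↔ wred = (0,1)
        have hf : (Finset.univ.filter fun y : Fin n → Bool =>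
            mstep (wred (List.ofFn y)) false = (0, 0)).card = Nc n 0 1 := by
          unfold Nc
          congr 1
          apply Finset.filter_congr
          intro y _
          exact mstep_false_iff_zero_zero _
        rw [ht, hf]
        have i1 : Nc n 0 1 + gg n 3 = gg n 1 := by
          have h := ih 0 1
          have e1 : 0 + 1 + 2 = 3 := rfl
          have e2 : 0 + 1 = 1 := rfl
          rw [e1, e2] at h
          exact h
        have hk := K0 n
        have e3 : 0 + 0 + 2 = 2 := rfl
        have e4 : 0 + 0 = 0 := rfl
        rw [e3, e4]
        omega
      · -- a = d + 1
        have hf : (Finset.univ.filter fun y : Fin n → Bool =>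
            mstep (wred (List.ofFn y)) false = (d + 1, 0)).card
            = Nc n (d + 1) 1 + Nc n d 0 := by
          have hsplit : (Finset.univ.filter fun y : Fin n → Bool =>
              mstep (wred (List.ofFn y)) false = (d + 1, 0)) =
              (Finset.univ.filter fun y : Fin n → Bool =>
                wred (List.ofFn y) = (d + 1, 1)) ∪
              (Finset.univ.filter fun y : Fin n → Bool =>
                wred (List.ofFn y) = (d, 0)) := by
            rw [← Finset.filter_or]
            apply Finset.filter_congr
            intro y _
            exact mstep_false_iff_succ_zero _ _
          rw [hsplit, Finset.card_union_of_disjoint]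
          · rfl
          · rw [Finset.disjoint_filter]
            intro y _ h1 h2
            rw [h1] at h2
            simp at h2
        rw [ht, hf]
        have i1 : Nc n (d + 1) 1 + gg n (d + 4) = gg n (d + 2) := by
          have h := ih (d + 1) 1
          have e1 : d + 1 + 1 + 2 = d + 4 := by omega
          have e2 : d + 1 + 1 = d + 2 := by omega
          rw [e1, e2] at h
          exact h
        have i2 : Nc n d 0 + gg n (d + 2) = gg n d := by
          have h := ih d 0
          have e1 : d + 0 + 2 = d + 2 := by omega
          have e2 : d + 0 = d := by omega
          rw [e1, e2] at h
          exact h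
        have hk := K1 n d
        have e3 : d + 1 + 0 + 2 = d + 3 := by omega
        have e4 : d + 1 + 0 = d + 1 := by omega
        rw [e3, e4]
        omega
    · -- b = c + 1
      have ht : (Finset.univ.filter fun y : Fin n → Bool =>
          mstep (wred (List.ofFn y)) true = (a, c + 1)).card = Nc n a c := by
        unfold Nc
        congr 1
        apply Finset.filter_congr
        intro y _
        exact mstep_true_iff _ _ _
      have hf : (Finset.univ.filter fun y : Fin n → Bool =>
          mstep (wred (List.ofFn y)) false = (a, c + 1)).card = Nc n a (c + 2) := by
        unfold Nc
        congr 1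
        apply Finset.filter_congr
        intro y _
        exact mstep_false_iff_succ _ _ _
      rw [ht, hf]
      have i1 : Nc n a c + gg n (a + c + 2) = gg n (a + c) := ih a c
      have i2 : Nc n a (c + 2) + gg n (a + c + 4) = gg n (a + c + 2) := by
        have h := ih a (c + 2)
        have e1 : a + (c + 2) + 2 = a + c + 4 := by omega
        have e2 : a + (c + 2) = a + c + 2 := by omega
        rw [e1, e2] at h
        exact h
      have hk := K1 n (a + c)
      have e3 : a + (c + 1) + 2 = a + c + 3 := by omega
      have e4 : a + (c + 1) = a + c + 1 := by omega
      rw [e3, e4]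
      omega


/-- fold of the automaton over the first `t` positions, skipping marked ones -/
def redF {n : ℕ} (x : Fin n → Bool) (M : Finset (Fin n)) : ℕ → ℕ × ℕ
  | 0 => (0, 0)
  | t + 1 =>
    if h : t < n then
      if (⟨t, h⟩ : Fin n) ∈ M then redF x M t else mstep (redF x M t) (x ⟨t, h⟩)
    else redF x M t

lemma redF_markStep {n : ℕ} {x : Fin n → Bool} {M M' : Finset (Fin n)}
    (h : MarkStep x M M') : redF x M' n = redF x M n := by
  obtain ⟨i, j, hij, hiM, hjM, hxi, hxj, hbet, rfl⟩ := h
  have hij' : i.val < j.val := hij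
  have memM' : ∀ k : Fin n, k ≠ i → k ≠ j → (k ∈ insert i (insert j M) ↔ k ∈ M) := by
    intro k h1 h2
    simp [Finset.mem_insert, h1, h2]
  -- claim A
  have hA : ∀ t, t ≤ i.val → redF x (insert i (insert j M)) t = redF x M t := by
    intro t
    induction t with
    | zero => intro _; rfl
    | succ t ih =>
      intro ht
      have ht' : t < n := lt_of_lt_of_le (by omega) (le_of_lt i.isLt)
      have hne1 : (⟨t, ht'⟩ : Fin n) ≠ i := by
        intro hc; apply_fun Fin.val at hc; simp at hc; omega
      have hne2 : (⟨t, ht'⟩ : Fin n) ≠ j := by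
        intro hc; apply_fun Fin.val at hc; simp at hc; omega
      simp only [redF, dif_pos ht', memM' _ hne1 hne2, ih (by omega)]
  -- claim B
  have hB : ∀ t, i.val < t → t ≤ j.val →
      redF x (insert i (insert j M)) t = redF x M i.val ∧
      redF x M t = mstep (redF x M i.val) true := by
    intro t
    induction t with
    | zero => omega
    | succ t ih =>
      intro h1 h2
      have ht' : t < n := lt_of_lt_of_le (by omega) (le_of_lt j.isLt)
      rcases Nat.lt_or_ge i.val t with hgt | hle2
      · -- t strictly between i and j
        have hkm : (⟨t, ht'⟩ : Fin n) ∈ M := hbet ⟨t, ht'⟩ hgt (show t < j.val by omega)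
        have hkm' : (⟨t, ht'⟩ : Fin n) ∈ insert i (insert j M) := by
          simp [Finset.mem_insert, hkm]
        obtain ⟨e1, e2⟩ := ih hgt (by omega)
        constructor
        · simp only [redF, dif_pos ht', if_pos hkm', e1]
        · simp only [redF, dif_pos ht', if_pos hkm, e2]
      · -- t = i.val
        have htv : t = i.val := by omega
        have hfin : (⟨t, ht'⟩ : Fin n) = i := Fin.ext htv
        constructor
        · have hin : (⟨t, ht'⟩ : Fin n) ∈ insert i (insert j M) := by
            rw [hfin]; exact Finset.mem_insert_self _ _
          rw [redF]
          simp only [dif_pos ht', if_pos hin]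
          rw [hA t (by omega), htv]
        · have hout : (⟨t, ht'⟩ : Fin n) ∉ M := by rw [hfin]; exact hiM
          rw [redF]
          simp only [dif_pos ht', if_neg hout]
          rw [hfin, hxi, htv]
  -- claim D
  have hD : ∀ t, j.val < t → t ≤ n → redF x (insert i (insert j M)) t = redF x M t := by
    intro t
    induction t with
    | zero => omega
    | succ t ih =>
      intro h1 h2
      have ht' : t < n := by omega
      rcases Nat.lt_or_ge j.val t with hgt | hle2
      · have hne1 : (⟨t, ht'⟩ : Fin n) ≠ i := by
          intro hc; apply_fun Fin.val at hc; simp at hc; omega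
        have hne2 : (⟨t, ht'⟩ : Fin n) ≠ j := by
          intro hc; apply_fun Fin.val at hc; simp at hc; omega
        simp only [redF, dif_pos ht', memM' _ hne1 hne2, ih hgt (by omega)]
      · have htv : t = j.val := by omega
        have hfin : (⟨t, ht'⟩ : Fin n) = j := Fin.ext htv
        obtain ⟨e1, e2⟩ := hB t (by omega) (by omega)
        have hin : (⟨t, ht'⟩ : Fin n) ∈ insert i (insert j M) := by
          rw [hfin]; exact Finset.mem_insert_of_mem (Finset.mem_insert_self _ _)
        have hout : (⟨t, ht'⟩ : Fin n) ∉ M := by rw [hfin]; exact hjM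
        rw [redF, redF]
        simp only [dif_pos ht', if_pos hin, if_neg hout]
        rw [hfin, hxj, e1, e2, mstep_true_false]
  exact hD n j.isLt (le_refl n)

lemma redF_reach {n : ℕ} {x : Fin n → Bool} {M : Finset (Fin n)}
    (h : Relation.ReflTransGen (MarkStep x) ∅ M) : redF x M n = redF x ∅ n := by
  induction h with
  | refl => rfl
  | tail _ hstep ih => rw [redF_markStep hstep, ih]

lemma terminal_sorted {n : ℕ} {x : Fin n → Bool} {M : Finset (Fin n)}
    (hterm : ∀ M', ¬ MarkStep x M M') :
    ∀ i j : Fin n, i < j → i ∉ M → j ∉ M → x i = true → x j = false → False := by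
  intro i0 j0 hij0 hi0 hj0 hxi0 hxj0
  classical
  set P : ℕ → Prop := fun d => ∃ i j : Fin n, i < j ∧ i ∉ M ∧ j ∉ M ∧
    x i = true ∧ x j = false ∧ j.val - i.val = d with hP
  have hex : ∃ d, P d := ⟨j0.val - i0.val, i0, j0, hij0, hi0, hj0, hxi0, hxj0, rfl⟩
  obtain ⟨i, j, hij, hi, hj, hxi, hxj, hd⟩ := Nat.find_spec hex
  have hbet : ∀ k : Fin n, i < k → k < j → k ∈ M := by
    intro k h1 h2
    by_contra hk
    cases hxk : x k with
    | true =>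
      have hPk : P (j.val - k.val) := ⟨k, j, h2, hk, hj, hxk, hxj, rfl⟩
      have hlt : j.val - k.val < Nat.find hex := by
        have h1' : i.val < k.val := h1
        have h2' : k.val < j.val := h2
        omega
      exact Nat.find_min hex hlt hPk
    | false =>
      have hPk : P (k.val - i.val) := ⟨i, k, h1, hi, hk, hxi, hxk, rfl⟩
      have hlt : k.val - i.val < Nat.find hex := by
        have h1' : i.val < k.val := h1
        have h2' : k.val < j.val := h2
        omega
      exact Nat.find_min hex hlt hPk
  exact hterm _ ⟨i, j, hij, hi, hj, hxi, hxj, hbet, rfl⟩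

lemma count_step {n : ℕ} (P : Fin n → Prop) [DecidablePred P] (t : ℕ) (h : t < n) :
    (Finset.univ.filter fun k : Fin n => k.val < t + 1 ∧ P k).card =
    (Finset.univ.filter fun k : Fin n => k.val < t ∧ P k).card +
      (if P ⟨t, h⟩ then 1 else 0) := by
  split_ifs with hp
  · have he : (Finset.univ.filter fun k : Fin n => k.val < t + 1 ∧ P k) =
        insert ⟨t, h⟩ (Finset.univ.filter fun k : Fin n => k.val < t ∧ P k) := by
      ext k
      simp only [Finset.mem_filter, Finset.mem_univ, true_and, Finset.mem_insert]
      constructor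
      · rintro ⟨h1, h2⟩
        rcases Nat.lt_or_ge k.val t with h3 | h3
        · exact Or.inr ⟨h3, h2⟩
        · left; apply Fin.ext; show k.val = t; omega
      · rintro (rfl | ⟨h1, h2⟩)
        · exact ⟨Nat.lt_succ_self t, hp⟩
        · exact ⟨by omega, h2⟩
    have hnotmem : (⟨t, h⟩ : Fin n) ∉
        Finset.univ.filter (fun k : Fin n => k.val < t ∧ P k) := by
      simp only [Finset.mem_filter, Finset.mem_univ, true_and]
      rintro ⟨hc, -⟩
      exact Nat.lt_irrefl t hc
    rw [he, Finset.card_insert_of_notMem hnotmem]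
  · have he2 : (Finset.univ.filter fun k : Fin n => k.val < t + 1 ∧ P k) =
        (Finset.univ.filter fun k : Fin n => k.val < t ∧ P k) := by
      ext k
      simp only [Finset.mem_filter, Finset.mem_univ, true_and]
      constructor
      · rintro ⟨h1, h2⟩
        refine ⟨?_, h2⟩
        rcases Nat.lt_or_ge k.val t with h3 | h3
        · exact h3
        · exfalso
          apply hp
          have hk : k = ⟨t, h⟩ := by apply Fin.ext; show k.val = t; omega
          rwa [hk] at h2
      · rintro ⟨h1, h2⟩
        exact ⟨by omega, h2⟩
    rw [he2, Nat.add_zero]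

lemma terminal_counts {n : ℕ} {x : Fin n → Bool} {M : Finset (Fin n)}
    (hsort : ∀ i j : Fin n, i < j → i ∉ M → j ∉ M → x i = true → x j = false → False) :
    ∀ t, t ≤ n → redF x M t =
      ((Finset.univ.filter fun k : Fin n => k.val < t ∧ k ∉ M ∧ x k = false).card,
       (Finset.univ.filter fun k : Fin n => k.val < t ∧ k ∉ M ∧ x k = true).card) := by
  classical
  intro t
  induction t with
  | zero =>
    intro _
    have h0 : ∀ (v : Bool), (Finset.univ.filter
        fun k : Fin n => k.val < 0 ∧ k ∉ M ∧ x k = v).card = 0 := by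
      intro v
      rw [Finset.card_eq_zero, Finset.filter_eq_empty_iff]
      intro k _
      simp
    rw [redF, h0, h0]
  | succ t ih =>
    intro ht
    have h : t < n := by omega
    have ihh := ih (by omega)
    by_cases hm : (⟨t, h⟩ : Fin n) ∈ M
    · rw [count_step (fun k => k ∉ M ∧ x k = false) t h,
        count_step (fun k => k ∉ M ∧ x k = true) t h]
      have e1 : redF x M (t + 1) = redF x M t := by
        rw [redF]; simp only [dif_pos h, if_pos hm]
      have i1 : (if (⟨t, h⟩ : Fin n) ∉ M ∧ x ⟨t, h⟩ = false then 1 else 0) = 0 := by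
        rw [if_neg]; rintro ⟨hc, _⟩; exact hc hm
      have i2 : (if (⟨t, h⟩ : Fin n) ∉ M ∧ x ⟨t, h⟩ = true then 1 else 0) = 0 := by
        rw [if_neg]; rintro ⟨hc, _⟩; exact hc hm
      rw [e1, ihh, i1, i2, Nat.add_zero, Nat.add_zero]
    · cases hxt : x ⟨t, h⟩ with
      | true =>
        rw [count_step (fun k => k ∉ M ∧ x k = false) t h,
          count_step (fun k => k ∉ M ∧ x k = true) t h]
        have e1 : redF x M (t + 1) = mstep (redF x M t) true := by
          rw [redF]; simp only [dif_pos h, if_neg hm, hxt]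
        have i1 : (if (⟨t, h⟩ : Fin n) ∉ M ∧ x ⟨t, h⟩ = false then 1 else 0) = 0 := by
          rw [if_neg]; rintro ⟨_, hc⟩; rw [hxt] at hc; exact Bool.noConfusion hc
        have i2 : (if (⟨t, h⟩ : Fin n) ∉ M ∧ x ⟨t, h⟩ = true then 1 else 0) = 1 :=
          if_pos ⟨hm, hxt⟩
        rw [e1, ihh, mstep_true, i1, i2]
        simp only [Nat.add_zero]
      | false =>
        rw [count_step (fun k => k ∉ M ∧ x k = false) t h,
          count_step (fun k => k ∉ M ∧ x k = true) t h]
        have hb : (Finset.univ.filter fun k : Fin n =>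
            k.val < t ∧ k ∉ M ∧ x k = true).card = 0 := by
          rw [Finset.card_eq_zero, Finset.filter_eq_empty_iff]
          rintro k _ ⟨h1, h2, h3⟩
          exact hsort k ⟨t, h⟩ h1 h2 hm h3 hxt
        have e1 : redF x M (t + 1) = mstep (redF x M t) false := by
          rw [redF]; simp only [dif_pos h, if_neg hm, hxt]
        have i1 : (if (⟨t, h⟩ : Fin n) ∉ M ∧ x ⟨t, h⟩ = false then 1 else 0) = 1 :=
          if_pos ⟨hm, hxt⟩
        have i2 : (if (⟨t, h⟩ : Fin n) ∉ M ∧ x ⟨t, h⟩ = true then 1 else 0) = 0 := by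
          rw [if_neg]; rintro ⟨_, hc⟩; rw [hxt] at hc; exact Bool.noConfusion hc
        rw [e1, ihh, hb, mstep_false_zero, i1, i2]

lemma redF_empty_eq_wred {n : ℕ} (x : Fin n → Bool) :
    redF x ∅ n = wred (List.ofFn x) := by
  have key : ∀ t, t ≤ n →
      redF x ∅ t = List.foldl mstep (0, 0) ((List.ofFn x).take t) := by
    intro t
    induction t with
    | zero => intro _; rfl
    | succ t ih =>
      intro ht
      have h : t < n := by omega
      have hlen : t < (List.ofFn x).length := by
        rw [List.length_ofFn]; exact h
      rw [List.take_succ, List.getElem?_eq_getElem hlen]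
      have hget : (List.ofFn x)[t] = x ⟨t, h⟩ := by
        simp [List.getElem_ofFn]
      rw [hget]
      simp only [Option.toList_some, List.foldl_concat]
      rw [redF]
      simp only [dif_pos h, Finset.notMem_empty, if_false, ih (by omega)]
  have h1 := key n (le_refl n)
  rw [h1]
  have h2 : (List.ofFn x).take n = List.ofFn x := by
    apply List.take_of_length_le
    rw [List.length_ofFn]
  rw [h2]
  rfl

lemma markStep_card {n : ℕ} {x : Fin n → Bool} {M M' : Finset (Fin n)}
    (h : MarkStep x M M') : M.card < M'.card := by
  obtain ⟨i, j, hij, hiM, hjM, _, _, _, rfl⟩ := h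
  have hne : i ≠ j := ne_of_lt hij
  rw [Finset.card_insert_of_notMem (by simp [Finset.mem_insert, hne, hiM]),
    Finset.card_insert_of_notMem hjM]
  omega

lemma exists_terminal {n : ℕ} (x : Fin n → Bool) :
    ∃ M : Finset (Fin n), Relation.ReflTransGen (MarkStep x) ∅ M ∧
      ∀ M', ¬ MarkStep x M M' := by
  classical
  obtain ⟨M, hM, hmax⟩ := Set.Finite.exists_maximalFor (fun M : Finset (Fin n) => M.card)
    {M | Relation.ReflTransGen (MarkStep x) ∅ M}
    (Set.toFinite _) ⟨∅, Relation.ReflTransGen.refl⟩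
  refine ⟨M, hM, ?_⟩
  intro M' hstep
  have hM' : Relation.ReflTransGen (MarkStep x) ∅ M' := Relation.ReflTransGen.tail hM hstep
  have hcard := markStep_card hstep
  have : M'.card ≤ M.card := hmax hM' (le_of_lt hcard)
  omega

lemma filter_drop_lt {n : ℕ} (P : Fin n → Prop) [DecidablePred P] :
    (Finset.univ.filter fun k : Fin n => k.val < n ∧ P k) =
    (Finset.univ.filter fun k : Fin n => P k) := by
  apply Finset.filter_congr
  intro k _
  simp [k.isLt]

/-- For `a + b ≡ n (mod 2)` and `a + b ≤ n`, the number of `x ∈ {0,1}^n` whose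
De Bruijn–Tengbergen–Kruyswijk marking has exactly `a` unmarked zeros and exactly `b`
unmarked ones equals `C(n, (n−a−b)/2) − C(n, (n−a−b−2)/2)` (with the convention that
binomial coefficients with negative lower index vanish). -/
theorem card_marking_zeros_ones (n a b : ℕ)
    (hmod : (a + b) % 2 = n % 2) (hle : a + b ≤ n) :
    {x : Fin n → Bool | ∃ M : Finset (Fin n),
        Relation.ReflTransGen (MarkStep x) ∅ M ∧ (∀ M', ¬ MarkStep x M M') ∧
        (Finset.univ.filter fun i => i ∉ M ∧ x i = false).card = a ∧
        (Finset.univ.filter fun i => i ∉ M ∧ x i = true).card = b}.ncard =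
      Nat.choose n ((n - a - b) / 2) -
        (if a + b + 2 ≤ n then Nat.choose n ((n - a - b - 2) / 2) else 0) := by
  classical
  have hset : {x : Fin n → Bool | ∃ M : Finset (Fin n),
      Relation.ReflTransGen (MarkStep x) ∅ M ∧ (∀ M', ¬ MarkStep x M M') ∧
      (Finset.univ.filter fun i => i ∉ M ∧ x i = false).card = a ∧
      (Finset.univ.filter fun i => i ∉ M ∧ x i = true).card = b} =
      ↑(Finset.univ.filter fun x : Fin n → Bool => wred (List.ofFn x) = (a, b)) := by
    ext x
    simp only [Set.mem_setOf_eq, Finset.coe_filter, Finset.mem_univ, true_and]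
    constructor
    · rintro ⟨M, hreach, hterm, ha, hb⟩
      have hsort := terminal_sorted hterm
      have hc := terminal_counts hsort n (le_refl n)
      rw [filter_drop_lt (fun k => k ∉ M ∧ x k = false),
        filter_drop_lt (fun k => k ∉ M ∧ x k = true)] at hc
      calc wred (List.ofFn x) = redF x ∅ n := (redF_empty_eq_wred x).symm
        _ = redF x M n := (redF_reach hreach).symm
        _ = (a, b) := by rw [hc, ha, hb]
    · intro hw
      obtain ⟨M, hreach, hterm⟩ := exists_terminal x
      have hsort := terminal_sorted hterm
      have hc := terminal_counts hsort n (le_refl n)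
      rw [filter_drop_lt (fun k => k ∉ M ∧ x k = false),
        filter_drop_lt (fun k => k ∉ M ∧ x k = true)] at hc
      have hMab : redF x M n = (a, b) := by
        rw [redF_reach hreach, redF_empty_eq_wred x, hw]
      rw [hc] at hMab
      obtain ⟨h1, h2⟩ := Prod.mk.injEq _ _ _ _ ▸ hMab
      exact ⟨M, hreach, hterm, h1, h2⟩
  rw [hset, Set.ncard_coe_finset]
  have key := Nc_add_gg n a b
  have hNc : (Finset.univ.filter fun x : Fin n → Bool =>
      wred (List.ofFn x) = (a, b)).card = Nc n a b := rfl
  rw [hNc]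
  have hg1 : gg n (a + b) = n.choose ((n - a - b) / 2) := by
    unfold gg
    rw [if_pos ⟨hle, hmod⟩, ← Nat.sub_sub]
  by_cases h2 : a + b + 2 ≤ n
  · have hg2 : gg n (a + b + 2) = n.choose ((n - a - b - 2) / 2) := by
      unfold gg
      rw [if_pos ⟨h2, by omega⟩]
      congr 1
      omega
    rw [if_pos h2]
    omega
  · have hg2 : gg n (a + b + 2) = 0 := by
      unfold gg
      rw [if_neg (by omega)]
    rw [if_neg h2]
    omega
end

section
/- Any bijection f : {0,1}^n → {x ∈ {0,1}^{n+1} : |x| > n/2} (n even) has maximum stretch at least 2: there exist x ∈ {0,1}^n and i ∈ [n] with distance(f(x), f(x+e_i)) ≥ 2. -/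
/-- Flip the `i`-th bit of `x` (i.e. `x + e_i`). -/
def bflip {n : ℕ} (x : Fin n → Bool) (i : Fin n) : Fin n → Bool :=
  Function.update x i (!(x i))

lemma bflip_ne {n : ℕ} (x : Fin n → Bool) (i : Fin n) : bflip x i ≠ x := by
  intro h
  have := congrFun h i
  simp [bflip] at this

lemma bflip_inj {n : ℕ} (x : Fin n → Bool) : Function.Injective (bflip x) := by
  intro i i' h
  by_contra hne
  have h2 := congrFun h i
  simp only [bflip, Function.update_self, Function.update_of_ne hne] at h2
  cases hxi : x i <;> rw [hxi] at h2 <;> exact Bool.noConfusion h2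

/-- Any bijection `f` from `{0,1}^n` (`n` even, positive) onto the Hamming ball
`{z ∈ {0,1}^{n+1} : |z| > n/2}` has maximum stretch at least 2: some edge of the cube is
mapped to a pair at Hamming distance at least 2. -/
theorem maxStretch_ge_two (n : ℕ) (hn : Even n) (hpos : 0 < n)
    (f : (Fin n → Bool) → Fin (n + 1) → Bool)
    (hf : Set.BijOn f Set.univ {z : Fin (n + 1) → Bool | n / 2 < hWt z}) :
    ∃ x : Fin n → Bool, ∃ i : Fin n,
      2 ≤ hammingDist (f x) (f (bflip x i)) := by
  by_contra hcon
  push_neg at hcon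
  have hinj : Function.Injective f := fun a b hab =>
    hf.injOn (Set.mem_univ a) (Set.mem_univ b) hab
  have hhalf : n / 2 < n := Nat.div_lt_self hpos one_lt_two
  have hlt : n / 2 + 1 < n + 1 := by omega
  set a : Fin (n + 1) := ⟨n / 2 + 1, hlt⟩ with ha
  set z : Fin (n + 1) → Bool := fun j => decide (j < a) with hzdef
  have hfilter : (Finset.univ.filter fun j : Fin (n+1) => z j = true) = Finset.Iio a := by
    ext j; simp [hzdef]
  have hz : hWt z = n / 2 + 1 := by
    rw [hWt, hfilter, Fin.card_Iio]
  have hzmem : z ∈ {w : Fin (n+1) → Bool | n / 2 < hWt w} := by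
    simp only [Set.mem_setOf_eq, hz]; omega
  obtain ⟨x, -, hx⟩ := hf.surjOn hzmem
  have hball : ∀ i : Fin n, n / 2 < hWt (f (bflip x i)) := fun i =>
    hf.mapsTo (Set.mem_univ _)
  have hd1 : ∀ i : Fin n, (Finset.univ.filter fun k => z k ≠ f (bflip x i) k).card = 1 := by
    intro i
    have hne : f (bflip x i) ≠ f x := fun h => bflip_ne x i (hinj h)
    have h0 : hammingDist (f x) (f (bflip x i)) ≠ 0 := fun h0 =>
      hne (eq_of_hammingDist_eq_zero h0).symm
    have h2 := hcon x i
    have h1 : hammingDist (f x) (f (bflip x i)) = 1 := by omega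
    rw [hx] at h1
    simpa [hammingDist] using h1
  have hsing : ∀ i : Fin n, ∃ c : Fin (n+1),
      (Finset.univ.filter fun k => z k ≠ f (bflip x i) k) = {c} := fun i =>
    Finset.card_eq_one.mp (hd1 i)
  choose j hj using hsing
  have hdiff : ∀ i : Fin n, ∀ k : Fin (n+1), z k ≠ f (bflip x i) k ↔ k = j i := by
    intro i k
    have := Finset.ext_iff.mp (hj i) k
    simpa using this
  have hfalse : ∀ i : Fin n, z (j i) = false := by
    intro i
    by_contra hT
    have hT : z (j i) = true := by simpa using hT
    set w := f (bflip x i) with hw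
    have hwj : w (j i) = false := by
      have hne := (hdiff i (j i)).mpr rfl
      rw [← hw, hT] at hne
      cases h' : w (j i)
      · rfl
      · exact absurd h'.symm hne
    have hfw : (Finset.univ.filter fun k => w k = true)
        = (Finset.univ.filter fun k => z k = true).erase (j i) := by
      ext k
      simp only [Finset.mem_filter, Finset.mem_erase, Finset.mem_univ, true_and]
      constructor
      · intro hk
        have hkne : k ≠ j i := fun h => by rw [h, hwj] at hk; exact Bool.false_ne_true hk
        have heq : z k = w k := by
          by_contra hne; exact hkne ((hdiff i k).mp hne)
        exact ⟨hkne, heq ▸ hk⟩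
      · rintro ⟨hkne, hk⟩
        have heq : z k = w k := by
          by_contra hne; exact hkne ((hdiff i k).mp hne)
        exact heq ▸ hk
    have hmem : j i ∈ Finset.univ.filter fun k => z k = true := by
      simp [hT]
    have hz' : (Finset.univ.filter fun k => z k = true).card = n / 2 + 1 := hz
    have hwcard : hWt w = n / 2 := by
      rw [hWt, hfw, Finset.card_erase_of_mem hmem, hz']
      omega
    have := hball i
    rw [← hw, hwcard] at this
    omega
  have hjinj : Function.Injective j := by
    intro i i' h
    apply bflip_inj x
    apply hinj
    funext k
    by_cases hk : k = j i
    · subst hk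
      have h1 : z (j i) ≠ f (bflip x i) (j i) := (hdiff i _).mpr rfl
      have h2 : z (j i) ≠ f (bflip x i') (j i) := (hdiff i' _).mpr h
      revert h1 h2
      cases z (j i) <;> cases f (bflip x i) (j i) <;> cases f (bflip x i') (j i) <;> decide
    · have e1 : z k = f (bflip x i) k := by
        by_contra hne; exact hk ((hdiff i k).mp hne)
      have e2 : z k = f (bflip x i') k := by
        by_contra hne; exact hk (h ▸ (hdiff i' k).mp hne)
      rw [← e1, ← e2]
  have hsum : (Finset.univ.filter fun k : Fin (n+1) => z k = true).card
      + (Finset.univ.filter fun k : Fin (n+1) => z k = false).card = n + 1 := by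
    have h1 := Finset.card_filter_add_card_filter_not
      (s := (Finset.univ : Finset (Fin (n+1)))) (p := fun k => z k = true)
    have h2 : (Finset.univ.filter fun k : Fin (n+1) => ¬ z k = true)
        = Finset.univ.filter fun k : Fin (n+1) => z k = false := by
      apply Finset.filter_congr
      intro k _
      simp
    rw [h2, Finset.card_fin] at h1
    exact h1
  have hz' : (Finset.univ.filter fun k : Fin (n+1) => z k = true).card = n / 2 + 1 := hz
  have hav : (a : ℕ) = n / 2 + 1 := rfl
  have hcard : (Finset.univ.filter fun k : Fin (n+1) => z k = false).card = n / 2 := by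
    have h3 := hsum
    rw [hz'] at h3
    have h4 : n % 2 = 0 := Nat.even_iff.mp hn
    generalize hgen : (Finset.univ.filter fun k : Fin (n+1) => z k = false).card = c at h3 ⊢
    omega
  have hle : (Finset.univ : Finset (Fin n)).card
      ≤ (Finset.univ.filter fun k : Fin (n+1) => z k = false).card :=
    Finset.card_le_card_of_injOn j (fun i _ => by simp [hfalse i])
      (fun i _ i' _ h => hjinj h)
  rw [Finset.card_fin, hcard] at hle
  omega
end
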